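/- Let φ(x) = E[tanh²(h+β√x Z)], q > 0 a fixed point of φ, and suppose φ'(z) > −φ(z)/(2z) for all z > 0 and that z ↦ φ(z)/z is decreasing on (0,∞). Then for all x ∈ (q, 2q]: q − (x−q)/2 < φ(x) < x; and for all x ∈ [q/2, q): x < φ(x) < q + (q−x)/(3x/q − 1). -/

import Mathlib

/-!
On an interval where `φ' > -c`, the function `z ↦ φ z + c z` is strictly increasing. Between `q`
and `x > q` we have `φ z < z`, so the derivative bound gives `φ' > -1/2`; between `x < q` and `q`
the monotonicity of `φ z / z` gives `φ' > -φ x / (2x)`. Comparing `φ + c·id` at `x` and at the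
fixed point `q` yields the two bounds. Differentiability of `φ` on `(0, ∞)` comes from
differentiating under the Gaussian integral, the `y`-derivative of `tanh² (h + β y z)` being
dominated by `2 |β| |z|`.
-/

open MeasureTheory ProbabilityTheory

/-- `φ(x) = E[tanh²(h + β √x Z)]`, `Z` a standard Gaussian. -/
noncomputable def phi (h β x : ℝ) : ℝ :=
  ∫ z, Real.tanh (h + β * Real.sqrt x * z) ^ 2 ∂(gaussianReal 0 1)

open Set

namespace Real

theorem hasDerivAt_tanh (x : ℝ) : HasDerivAt tanh (1 - tanh x ^ 2) x := by
  have hcosh : cosh x ≠ 0 := (cosh_pos x).ne'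
  rw [show tanh = fun y => sinh y / cosh y from funext tanh_eq_sinh_div_cosh]
  refine ((hasDerivAt_sinh x).div (hasDerivAt_cosh x) hcosh).congr_deriv ?_
  beta_reduce
  field_simp

@[fun_prop]
theorem continuous_tanh : Continuous tanh :=
  continuous_iff_continuousAt.2 fun x => (hasDerivAt_tanh x).continuousAt

theorem abs_tanh_mul_one_sub_tanh_sq_le_one (x : ℝ) : |tanh x * (1 - tanh x ^ 2)| ≤ 1 := by
  have ht := abs_tanh_lt_one x
  have hsq : tanh x ^ 2 < 1 := by rw [← sq_abs]; nlinarith [abs_nonneg (tanh x)]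
  rw [abs_mul, abs_of_pos (sub_pos.2 hsq)]
  nlinarith [abs_nonneg (tanh x), sq_nonneg (tanh x)]

end Real

open Real

theorem hasDerivAt_tanh_sq_affine (h β z y : ℝ) :
    HasDerivAt (fun y => tanh (h + β * y * z) ^ 2)
      (2 * (tanh (h + β * y * z) * (1 - tanh (h + β * y * z) ^ 2)) * (β * z)) y := by
  have hlin : HasDerivAt (fun y => h + β * y * z) (β * z) y := by
    simpa using (((hasDerivAt_id y).const_mul β).mul_const z).const_add h
  exact (((hasDerivAt_tanh _).comp y hlin).pow 2).congr_deriv (by simp only [Function.comp]; ring)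

theorem differentiable_integral_tanh_sq {μ : Measure ℝ} [IsFiniteMeasure μ]
    (hμ : Integrable id μ) (h β : ℝ) :
    Differentiable ℝ fun y => ∫ z, tanh (h + β * y * z) ^ 2 ∂μ := by
  intro y
  have hcont : ∀ y, Continuous fun z => tanh (h + β * y * z) ^ 2 := fun y => by fun_prop
  refine (hasDerivAt_integral_of_dominated_loc_of_deriv_le (bound := fun z => 2 * |β| * |z|)
    (F' := fun y z => 2 * (tanh (h + β * y * z) * (1 - tanh (h + β * y * z) ^ 2)) * (β * z))
    Filter.univ_mem (Filter.Eventually.of_forall fun y => (hcont y).aestronglyMeasurable)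
    ?_ ?_ ?_ ?_ ?_).2.differentiableAt
  · refine (integrable_const 1).mono' (hcont y).aestronglyMeasurable
      (Filter.Eventually.of_forall fun z => ?_)
    rw [Real.norm_eq_abs, abs_pow]
    exact pow_le_one₀ (abs_nonneg _) (abs_tanh_lt_one _).le
  · exact (by fun_prop : Continuous _).aestronglyMeasurable
  · refine Filter.Eventually.of_forall fun z y _ => ?_
    have := abs_tanh_mul_one_sub_tanh_sq_le_one (h + β * y * z)
    rw [Real.norm_eq_abs, abs_mul, abs_mul, abs_two, abs_mul β z]
    nlinarith [mul_nonneg (abs_nonneg β) (abs_nonneg z)]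
  · exact hμ.abs.const_mul (2 * |β|)
  · exact Filter.Eventually.of_forall fun z y _ => hasDerivAt_tanh_sq_affine h β z y

theorem differentiableOn_phi (h β : ℝ) : DifferentiableOn ℝ (phi h β) (Ioi 0) := fun x hx =>
  ((differentiable_integral_tanh_sq (memLp_one_iff_integrable.1 (memLp_id_gaussianReal 1)) h β
    (√x)).comp x (hasDerivAt_sqrt (ne_of_gt hx)).differentiableAt).differentiableWithinAt

theorem add_mul_lt_add_mul_of_neg_lt_deriv {f : ℝ → ℝ} {a b c : ℝ} (hab : a < b)
    (hf : DifferentiableOn ℝ f (Icc a b)) (hf' : ∀ z ∈ Ioo a b, -c < deriv f z) :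
    f a + c * a < f b + c * b := by
  have hmono : StrictMonoOn (fun z => f z + c * z) (Icc a b) := by
    refine strictMonoOn_of_deriv_pos (convex_Icc a b)
      (hf.continuousOn.add (by fun_prop)) fun z hz => ?_
    rw [interior_Icc] at hz
    have hfz := (hf.differentiableAt (Icc_mem_nhds hz.1 hz.2)).hasDerivAt
    have hg : HasDerivAt (fun z => f z + c * z) (deriv f z + c) z := by
      simpa using hfz.fun_add ((hasDerivAt_id z).const_mul c)
    rw [hg.deriv]
    linarith [hf' z hz]
  exact hmono (left_mem_Icc.2 hab.le) (right_mem_Icc.2 hab.le) hab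

section FixedPoint

variable {f : ℝ → ℝ} {q : ℝ}

theorem sub_half_lt_of_fixedPoint (hq : 0 < q) (hfix : f q = q)
    (hdiff : DifferentiableOn ℝ f (Ioi 0)) (hderiv : ∀ z, 0 < z → -f z / (2 * z) < deriv f z)
    (hbelow : ∀ x, q < x → f x < x) {x : ℝ} (hqx : q < x) :
    q - (x - q) / 2 < f x := by
  have hslope : ∀ z ∈ Ioo q x, -(1 / 2) < deriv f z := fun z hz => by
    have hz0 : 0 < z := hq.trans hz.1
    have : -(1 / 2) ≤ -f z / (2 * z) := by
      rw [neg_div, neg_le_neg_iff, div_le_iff₀ (by positivity)]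
      linarith [hbelow z hz.1]
    linarith [hderiv z hz0]
  have key := add_mul_lt_add_mul_of_neg_lt_deriv hqx
    (hdiff.mono fun z hz => hq.trans_le hz.1) hslope
  linarith

theorem lt_add_div_of_fixedPoint (hq : 0 < q) (hfix : f q = q)
    (hdiff : DifferentiableOn ℝ f (Ioi 0)) (hderiv : ∀ z, 0 < z → -f z / (2 * z) < deriv f z)
    (hratio : AntitoneOn (fun z => f z / z) (Ioi 0)) {x : ℝ} (hx : q / 3 < x) (hxq : x < q) :
    f x < q + (q - x) / (3 * x / q - 1) := by
  have hx0 : 0 < x := by linarith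
  have h3 : 0 < 3 * x - q := by linarith
  have hslope : ∀ z ∈ Ioo x q, -(f x / (2 * x)) < deriv f z := fun z hz => by
    have hz0 : 0 < z := hx0.trans hz.1
    have hle : f z / z ≤ f x / x := hratio hx0 hz0 hz.1.le
    have : -(f x / (2 * x)) ≤ -f z / (2 * z) := by
      rw [neg_div, neg_le_neg_iff, mul_comm 2 z, mul_comm 2 x, ← div_div, ← div_div]
      linarith
    linarith [hderiv z hz0]
  have key := add_mul_lt_add_mul_of_neg_lt_deriv hxq
    (hdiff.mono fun z hz => hx0.trans_le hz.1) hslope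
  rw [hfix] at key
  have hmul : f x * (3 * x - q) < 2 * x * q := by
    field_simp at key
    linarith
  have hbound : q + (q - x) / (3 * x / q - 1) = 2 * x * q / (3 * x - q) := by
    have hden : 3 * x / q - 1 = (3 * x - q) / q := by field_simp
    rw [hden, div_div_eq_mul_div, eq_div_iff h3.ne', add_mul, div_mul_cancel₀ _ h3.ne']
    ring
  rwa [hbound, lt_div_iff₀ h3]

end FixedPoint

/-- Quantitative bounds on `φ` near a positive fixed point `q`, assuming the derivative
bound `φ'(z) > −φ(z)/(2z)`, monotonicity of `z ↦ φ(z)/z`, and the comparison of `φ` with the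
identity on `(0,q)` and `(q,∞)`:
for `x ∈ (q, 2q]`, `q − (x−q)/2 < φ(x) < x`; and for `x ∈ [q/2, q)`,
`x < φ(x) < q + (q−x)/(3x/q − 1)`. -/
theorem stmt8 (h β q : ℝ) (hq : 0 < q) (hfix : phi h β q = q)
    (hderiv : ∀ z, 0 < z → -(phi h β z) / (2 * z) < deriv (phi h β) z)
    (hratio : AntitoneOn (fun z => phi h β z / z) (Set.Ioi 0))
    (habove : ∀ x, 0 < x → x < q → x < phi h β x)
    (hbelow : ∀ x, q < x → phi h β x < x) :
    (∀ x, q < x → x ≤ 2 * q → q - (x - q) / 2 < phi h β x ∧ phi h β x < x) ∧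
    (∀ x, q / 2 ≤ x → x < q →
      x < phi h β x ∧ phi h β x < q + (q - x) / (3 * x / q - 1)) := by
  have hdiff := differentiableOn_phi h β
  refine ⟨fun x hqx _ => ⟨?_, hbelow x hqx⟩, fun x hx hxq => ⟨habove x (by linarith) hxq, ?_⟩⟩
  · exact sub_half_lt_of_fixedPoint hq hfix hdiff hderiv hbelow hqx
  · exact lt_add_div_of_fixedPoint hq hfix hdiff hderiv hratio (by linarith) hxq
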